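/- Let λ, μ, μ* be positive reals with 2λ + μ = 1 and μ* ≤ μ. Define D₁^t, D₂^t : ℕ×ℕ → ℝ by D_i^0 = 0 and the recursions of the symmetric random walk with joint departures: for n in the interior ({n₁≥1,n₂≥1}), D_i^{t+1}(n) = λ(D_i^t(n+e₁)+D_i^t(n+e₂)) + μ D_i^t(n−e₁−e₂); for n on the horizontal axis ({n₁≥1,n₂=0}), D₁^{t+1}(n) = λ(D₁^t(n+e₁)+D₁^t(n+e₂)) + μ* D₁^t(n−e₁) + (μ−μ*)D₁^t(n) and D₂^{t+1}(n) = λ(D₂^t(n+e₁)+D₂^t(n+e₂)) − (μ−μ*)D₁^t(n−e₁); symmetrically on the vertical axis; and at the origin D_i^{t+1}(0) = −1 + λ(D_i^t(e₁)+D_i^t(e₂)) + (μ−μ*)D_i^t(0). Then for all t ≥ 0, i ∈ {1,2} and n: −1/μ* ≤ D_i^t(n) ≤ (μ−μ*)/(μ·μ*). -/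
import Mathlib


set_option maxHeartbeats 1000000 in
/-- Proposition 2: bounds on the bias terms of the symmetric random walk with
joint departures.  `D i t n` is the bias term `D_{i+1}^t(n)`; the recursion of
Proposition 1 is taken as its definition. -/
theorem joint_departures_bias_bounds
    (lam mu mus : ℝ) (hlam : 0 < lam) (hmu : 0 < mu) (hmus : 0 < mus)
    (hsum : 2 * lam + mu = 1) (hle : mus ≤ mu)
    (D : Fin 2 → ℕ → ℕ × ℕ → ℝ)
    (hD0 : ∀ i n, D i 0 n = 0)
    (hint : ∀ i t (n : ℕ × ℕ), 1 ≤ n.1 → 1 ≤ n.2 →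
      D i (t + 1) n =
        lam * (D i t (n.1 + 1, n.2) + D i t (n.1, n.2 + 1)) +
          mu * D i t (n.1 - 1, n.2 - 1))
    (hhor : ∀ t (n : ℕ × ℕ), 1 ≤ n.1 → n.2 = 0 →
      (D 0 (t + 1) n =
        lam * (D 0 t (n.1 + 1, n.2) + D 0 t (n.1, n.2 + 1)) +
          mus * D 0 t (n.1 - 1, n.2) + (mu - mus) * D 0 t n) ∧
      (D 1 (t + 1) n =
        lam * (D 1 t (n.1 + 1, n.2) + D 1 t (n.1, n.2 + 1)) -
          (mu - mus) * D 0 t (n.1 - 1, n.2)))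
    (hver : ∀ t (n : ℕ × ℕ), n.1 = 0 → 1 ≤ n.2 →
      (D 1 (t + 1) n =
        lam * (D 1 t (n.1 + 1, n.2) + D 1 t (n.1, n.2 + 1)) +
          mus * D 1 t (n.1, n.2 - 1) + (mu - mus) * D 1 t n) ∧
      (D 0 (t + 1) n =
        lam * (D 0 t (n.1 + 1, n.2) + D 0 t (n.1, n.2 + 1)) -
          (mu - mus) * D 1 t (n.1, n.2 - 1)))
    (horig : ∀ i t, D i (t + 1) (0, 0) =
      -1 + lam * (D i t (1, 0) + D i t (0, 1)) + (mu - mus) * D i t (0, 0)) :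
    ∀ t (i : Fin 2) (n : ℕ × ℕ),
      -(1 / mus) ≤ D i t n ∧ D i t n ≤ (mu - mus) / (mu * mus) := by
  have hmmus : 0 ≤ mu - mus := by linarith
  have hsq : (mu - mus) * (mu - mus) ≤ mu * mu :=
    mul_self_le_mul_self hmmus (by linarith)
  have main : ∀ t (i : Fin 2) n, -1 ≤ mus * D i t n ∧
      mu * mus * D i t n ≤ mu - mus := by
    intro t
    induction t with
    | zero =>
      intro i n
      rw [hD0]
      constructor <;> nlinarith
    | succ t ih =>
      intro i n
      obtain ⟨n1, n2⟩ := n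
      match n1, n2 with
      | m + 1, k + 1 =>
        have hrec := hint i t (m + 1, k + 1) (by simp) (by simp)
        simp only [Nat.add_sub_cancel] at hrec
        obtain ⟨hx1, hx2⟩ := ih i (m + 1 + 1, k + 1)
        obtain ⟨hy1, hy2⟩ := ih i (m + 1, k + 1 + 1)
        obtain ⟨hz1, hz2⟩ := ih i (m, k)
        rw [hrec]
        constructor
        · nlinarith [mul_le_mul_of_nonneg_left hx1 hlam.le,
            mul_le_mul_of_nonneg_left hy1 hlam.le,
            mul_le_mul_of_nonneg_left hz1 hmu.le]
        · nlinarith [mul_le_mul_of_nonneg_left hx2 hlam.le,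
            mul_le_mul_of_nonneg_left hy2 hlam.le,
            mul_le_mul_of_nonneg_left hz2 hmu.le, hmmus]
      | m + 1, 0 =>
        have hrec := hhor t (m + 1, 0) (by simp) rfl
        simp only [Nat.add_sub_cancel] at hrec
        obtain ⟨hx1, hx2⟩ := ih 0 (m + 1 + 1, 0)
        obtain ⟨hy1, hy2⟩ := ih 0 (m + 1, 0 + 1)
        obtain ⟨hz1, hz2⟩ := ih 0 (m, 0)
        obtain ⟨hw1, hw2⟩ := ih 0 (m + 1, 0)
        obtain ⟨hX1, hX2⟩ := ih 1 (m + 1 + 1, 0)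
        obtain ⟨hY1, hY2⟩ := ih 1 (m + 1, 0 + 1)
        fin_cases i <;> simp only [Fin.zero_eta, Fin.mk_one]
        · rw [hrec.1]
          constructor
          · nlinarith [mul_le_mul_of_nonneg_left hx1 hlam.le,
              mul_le_mul_of_nonneg_left hy1 hlam.le,
              mul_le_mul_of_nonneg_left hz1 hmus.le,
              mul_le_mul_of_nonneg_left hw1 hmmus]
          · nlinarith [mul_le_mul_of_nonneg_left hx2 hlam.le,
              mul_le_mul_of_nonneg_left hy2 hlam.le,
              mul_le_mul_of_nonneg_left hz2 hmus.le,
              mul_le_mul_of_nonneg_left hw2 hmmus, hmmus, hmus.le]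
        · rw [hrec.2]
          constructor
          · have key : mu * (-1) ≤ mu * (mus * (lam *
                (D 1 t (m + 1 + 1, 0) + D 1 t (m + 1, 0 + 1)) -
                (mu - mus) * D 0 t (m, 0))) := by
              nlinarith [mul_le_mul_of_nonneg_left hX1 (mul_nonneg hlam.le hmu.le),
                mul_le_mul_of_nonneg_left hY1 (mul_nonneg hlam.le hmu.le),
                mul_le_mul_of_nonneg_left hz2 hmmus, hsq]
            exact le_of_mul_le_mul_left key hmu
          · nlinarith [mul_le_mul_of_nonneg_left hX2 hlam.le,
              mul_le_mul_of_nonneg_left hY2 hlam.le,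
              mul_le_mul_of_nonneg_left hz1 (mul_nonneg hmmus hmu.le), hmmus]
      | 0, k + 1 =>
        have hrec := hver t (0, k + 1) rfl (by simp)
        simp only [Nat.add_sub_cancel] at hrec
        obtain ⟨hx1, hx2⟩ := ih 1 (0 + 1, k + 1)
        obtain ⟨hy1, hy2⟩ := ih 1 (0, k + 1 + 1)
        obtain ⟨hz1, hz2⟩ := ih 1 (0, k)
        obtain ⟨hw1, hw2⟩ := ih 1 (0, k + 1)
        obtain ⟨hX1, hX2⟩ := ih 0 (0 + 1, k + 1)
        obtain ⟨hY1, hY2⟩ := ih 0 (0, k + 1 + 1)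
        fin_cases i <;> simp only [Fin.zero_eta, Fin.mk_one]
        · rw [hrec.2]
          constructor
          · have key : mu * (-1) ≤ mu * (mus * (lam *
                (D 0 t (0 + 1, k + 1) + D 0 t (0, k + 1 + 1)) -
                (mu - mus) * D 1 t (0, k))) := by
              nlinarith [mul_le_mul_of_nonneg_left hX1 (mul_nonneg hlam.le hmu.le),
                mul_le_mul_of_nonneg_left hY1 (mul_nonneg hlam.le hmu.le),
                mul_le_mul_of_nonneg_left hz2 hmmus, hsq]
            exact le_of_mul_le_mul_left key hmu
          · nlinarith [mul_le_mul_of_nonneg_left hX2 hlam.le,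
              mul_le_mul_of_nonneg_left hY2 hlam.le,
              mul_le_mul_of_nonneg_left hz1 (mul_nonneg hmmus hmu.le), hmmus]
        · rw [hrec.1]
          constructor
          · nlinarith [mul_le_mul_of_nonneg_left hx1 hlam.le,
              mul_le_mul_of_nonneg_left hy1 hlam.le,
              mul_le_mul_of_nonneg_left hz1 hmus.le,
              mul_le_mul_of_nonneg_left hw1 hmmus]
          · nlinarith [mul_le_mul_of_nonneg_left hx2 hlam.le,
              mul_le_mul_of_nonneg_left hy2 hlam.le,
              mul_le_mul_of_nonneg_left hz2 hmus.le,
              mul_le_mul_of_nonneg_left hw2 hmmus, hmmus, hmus.le]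
      | 0, 0 =>
        have hrec := horig i t
        obtain ⟨hx1, hx2⟩ := ih i (1, 0)
        obtain ⟨hy1, hy2⟩ := ih i (0, 1)
        obtain ⟨hw1, hw2⟩ := ih i (0, 0)
        rw [hrec]
        constructor
        · nlinarith [mul_le_mul_of_nonneg_left hx1 hlam.le,
            mul_le_mul_of_nonneg_left hy1 hlam.le,
            mul_le_mul_of_nonneg_left hw1 hmmus]
        · nlinarith [mul_le_mul_of_nonneg_left hx2 hlam.le,
            mul_le_mul_of_nonneg_left hy2 hlam.le,
            mul_le_mul_of_nonneg_left hw2 hmmus, hmmus,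
            mul_nonneg hmus.le hmmus, mul_nonneg hmus.le hmu.le]
  intro t i n
  obtain ⟨h1, h2⟩ := main t i n
  constructor
  · have : (-1) / mus ≤ D i t n := (div_le_iff₀ hmus).mpr (by nlinarith)
    simpa [neg_div] using this
  · exact (le_div_iff₀ (mul_pos hmu hmus)).mpr (by nlinarith)
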